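/- arXiv:1905.08351 — 8 statements merged into one kernel-verified Lean document; each statement's English description precedes it below -/
import Mathlib

section
/- Let A be an associative K-algebra in which every K-linear combination x of given elements a, b, y₁, y₂ satisfies that x² is central in the subalgebra they generate. Then a·y₁·y₂·b − b·y₁·y₂·a = (1/2)·((y₁y₂ + y₂y₁)[a,b] + y₁[a,b]y₂ − y₂[a,b]y₁), where [a,b] = ab − ba. -/
private lemma pol_aux {A : Type*} [Ring A] (u v c : A)
    (h1 : u ^ 2 * c = c * u ^ 2) (h2 : v ^ 2 * c = c * v ^ 2)
    (h3 : (u + v) ^ 2 * c = c * (u + v) ^ 2) :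
    (u * v + v * u) * c = c * (u * v + v * u) := by
  have e : u * v + v * u = (u + v) ^ 2 - u ^ 2 - v ^ 2 := by noncomm_ring
  rw [e, sub_mul, sub_mul, mul_sub, mul_sub, h1, h2, h3]

theorem stmt3 (K A : Type*) [Field K] [CharZero K] [Ring A] [Algebra K A]
    (a b y₁ y₂ : A)
    (h : ∀ α β γ δ : K, ∀ c ∈ ({a, b, y₁, y₂} : Set A),
        (α • a + β • b + γ • y₁ + δ • y₂) ^ 2 * c =
          c * (α • a + β • b + γ • y₁ + δ • y₂) ^ 2) :
    a * y₁ * y₂ * b - b * y₁ * y₂ * a =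
      (2 : K)⁻¹ • ((y₁ * y₂ + y₂ * y₁) * (a * b - b * a)
        + y₁ * (a * b - b * a) * y₂ - y₂ * (a * b - b * a) * y₁) := by
  -- squares and pairwise sums commute with each generator
  have hsq : ∀ α β γ δ : K, ∀ c ∈ ({a, b, y₁, y₂} : Set A),
      (α • a + β • b + γ • y₁ + δ • y₂) ^ 2 * c =
        c * (α • a + β • b + γ • y₁ + δ • y₂) ^ 2 := h
  have ha : a ∈ ({a, b, y₁, y₂} : Set A) := by simp
  have hb : b ∈ ({a, b, y₁, y₂} : Set A) := by simp
  have hy₁ : y₁ ∈ ({a, b, y₁, y₂} : Set A) := by simp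
  have hy₂ : y₂ ∈ ({a, b, y₁, y₂} : Set A) := by simp
  have sqa : ∀ c ∈ ({a, b, y₁, y₂} : Set A), a ^ 2 * c = c * a ^ 2 := by
    intro c hc; have := h 1 0 0 0 c hc; simpa using this
  have sqb : ∀ c ∈ ({a, b, y₁, y₂} : Set A), b ^ 2 * c = c * b ^ 2 := by
    intro c hc; have := h 0 1 0 0 c hc; simpa using this
  have sq1 : ∀ c ∈ ({a, b, y₁, y₂} : Set A), y₁ ^ 2 * c = c * y₁ ^ 2 := by
    intro c hc; have := h 0 0 1 0 c hc; simpa using this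
  have sq2 : ∀ c ∈ ({a, b, y₁, y₂} : Set A), y₂ ^ 2 * c = c * y₂ ^ 2 := by
    intro c hc; have := h 0 0 0 1 c hc; simpa using this
  have sab : ∀ c ∈ ({a, b, y₁, y₂} : Set A), (a + b) ^ 2 * c = c * (a + b) ^ 2 := by
    intro c hc; have := h 1 1 0 0 c hc; simpa using this
  have sa1 : ∀ c ∈ ({a, b, y₁, y₂} : Set A), (a + y₁) ^ 2 * c = c * (a + y₁) ^ 2 := by
    intro c hc; have := h 1 0 1 0 c hc; simpa using this
  have sa2 : ∀ c ∈ ({a, b, y₁, y₂} : Set A), (a + y₂) ^ 2 * c = c * (a + y₂) ^ 2 := by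
    intro c hc; have := h 1 0 0 1 c hc; simpa using this
  have sb1 : ∀ c ∈ ({a, b, y₁, y₂} : Set A), (b + y₁) ^ 2 * c = c * (b + y₁) ^ 2 := by
    intro c hc; have := h 0 1 1 0 c hc; simpa using this
  -- polarized commutation relations needed
  have e1 : (a * b + b * a) * y₁ - y₁ * (a * b + b * a) = 0 :=
    sub_eq_zero_of_eq (pol_aux a b y₁ (sqa y₁ hy₁) (sqb y₁ hy₁) (sab y₁ hy₁))
  have e2 : (a * b + b * a) * y₂ - y₂ * (a * b + b * a) = 0 :=
    sub_eq_zero_of_eq (pol_aux a b y₂ (sqa y₂ hy₂) (sqb y₂ hy₂) (sab y₂ hy₂))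
  have e3 : (a * y₁ + y₁ * a) * b - b * (a * y₁ + y₁ * a) = 0 :=
    sub_eq_zero_of_eq (pol_aux a y₁ b (sqa b hb) (sq1 b hb) (sa1 b hb))
  have e4 : (a * y₁ + y₁ * a) * y₂ - y₂ * (a * y₁ + y₁ * a) = 0 :=
    sub_eq_zero_of_eq (pol_aux a y₁ y₂ (sqa y₂ hy₂) (sq1 y₂ hy₂) (sa1 y₂ hy₂))
  have e5 : (a * y₂ + y₂ * a) * b - b * (a * y₂ + y₂ * a) = 0 :=
    sub_eq_zero_of_eq (pol_aux a y₂ b (sqa b hb) (sq2 b hb) (sa2 b hb))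
  have e6 : (a * y₂ + y₂ * a) * y₁ - y₁ * (a * y₂ + y₂ * a) = 0 :=
    sub_eq_zero_of_eq (pol_aux a y₂ y₁ (sqa y₁ hy₁) (sq2 y₁ hy₁) (sa2 y₁ hy₁))
  have e7 : (b * y₁ + y₁ * b) * y₂ - y₂ * (b * y₁ + y₁ * b) = 0 :=
    sub_eq_zero_of_eq (pol_aux b y₁ y₂ (sqb y₂ hy₂) (sq1 y₂ hy₂) (sb1 y₂ hy₂))
  -- the key free-ring identity
  have key : 2 * (a * y₁ * y₂ * b - b * y₁ * y₂ * a)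
      - ((y₁ * y₂ + y₂ * y₁) * (a * b - b * a)
        + y₁ * (a * b - b * a) * y₂ - y₂ * (a * b - b * a) * y₁)
      = -(y₂ * ((a * b + b * a) * y₁ - y₁ * (a * b + b * a)))
        - 2 * (((a * b + b * a) * y₁ - y₁ * (a * b + b * a)) * y₂)
        - y₁ * ((a * b + b * a) * y₂ - y₂ * (a * b + b * a))
        - 2 * (((a * y₁ + y₁ * a) * b - b * (a * y₁ + y₁ * a)) * y₂)
        + 2 * (((a * y₁ + y₁ * a) * y₂ - y₂ * (a * y₁ + y₁ * a)) * b)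
        + 2 * (((a * y₂ + y₂ * a) * b - b * (a * y₂ + y₂ * a)) * y₁)
        + 2 * (b * ((a * y₂ + y₂ * a) * y₁ - y₁ * (a * y₂ + y₂ * a)))
        + 2 * (((a * y₂ + y₂ * a) * y₁ - y₁ * (a * y₂ + y₂ * a)) * b)
        + 2 * (a * ((b * y₁ + y₁ * b) * y₂ - y₂ * (b * y₁ + y₁ * b))) := by
    noncomm_ring
  rw [e1, e2, e3, e4, e5, e6, e7] at key
  simp only [mul_zero, zero_mul, neg_zero, sub_zero, add_zero, zero_add, zero_sub] at key
  have main : (y₁ * y₂ + y₂ * y₁) * (a * b - b * a)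
      + y₁ * (a * b - b * a) * y₂ - y₂ * (a * b - b * a) * y₁
      = 2 * (a * y₁ * y₂ * b - b * y₁ * y₂ * a) := (sub_eq_zero.mp key).symm
  rw [main, two_mul, ← two_smul K, smul_smul,
    inv_mul_cancel₀ (two_ne_zero : (2 : K) ≠ 0), one_smul]
end

section
/- Let V be a vector space over a field K of characteristic 0 with a quadratic form Q, and let e₁, …, eₙ be vectors in V that are pairwise orthogonal with respect to the polar form of Q and satisfy Q(eᵢ) ≠ 0 for all i. Then Sₙ(ι(e₁), …, ι(eₙ)) = n!·ι(e₁)⋯ι(eₙ) ≠ 0 in the Clifford algebra of Q, where Sₙ is the standard polynomial. -/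
section Aux
variable {A : Type*} [Ring A]

/-- Pull the `j`-th factor to the front, with sign, for an anticommuting family. -/
lemma pullOut : ∀ {n : ℕ} (u : Fin (n+1) → A),
    (∀ i j, i ≠ j → u i * u j = -(u j * u i)) → ∀ j : Fin (n+1),
    (List.ofFn u).prod = ((-1 : ℤ)^(j : ℕ)) • (u j * (List.ofFn (u ∘ j.succAbove)).prod) := by
  intro n
  induction n with
  | zero =>
    intro u _ j
    fin_cases j
    simp [List.ofFn_succ]
  | succ m ih =>
    intro u hu j
    refine Fin.cases ?_ (fun k => ?_) j
    · simp [List.ofFn_succ, Fin.succAbove_zero, Function.comp]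
    · have h' : ∀ i j, i ≠ j → (u ∘ Fin.succ) i * (u ∘ Fin.succ) j
          = -((u ∘ Fin.succ) j * (u ∘ Fin.succ) i) := by
        intro i j hij
        exact hu _ _ (fun h => hij (Fin.succ_injective _ h))
      have step := ih (u ∘ Fin.succ) h' k
      have hofn : List.ofFn (u ∘ (k.succ).succAbove)
          = u 0 :: List.ofFn ((u ∘ Fin.succ) ∘ k.succAbove) := by
        rw [List.ofFn_succ]
        refine congrArg₂ List.cons ?_ (congrArg List.ofFn (funext fun i => ?_))
        · simp
        · simp [Function.comp, Fin.succ_succAbove_succ]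
      have h1 : (List.ofFn fun i : Fin (m+1) => u i.succ) = List.ofFn (u ∘ Fin.succ) := rfl
      rw [List.ofFn_succ, List.prod_cons, h1, step, hofn]
      have hcomm : u 0 * u k.succ = -(u k.succ * u 0) :=
        hu 0 k.succ (Fin.succ_ne_zero k).symm
      rw [List.prod_cons]
      rw [mul_smul_comm]
      rw [show (u 0 : A) * ((u ∘ Fin.succ) k * (List.ofFn ((u ∘ Fin.succ) ∘ k.succAbove)).prod)
          = (u 0 * u k.succ) * (List.ofFn ((u ∘ Fin.succ) ∘ k.succAbove)).prod by
          simp [Function.comp, mul_assoc]]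
      rw [hcomm]
      have h2 : ((-1 : ℤ)^(k.succ : ℕ)) = -((-1 : ℤ)^(k : ℕ)) := by
        simp [Fin.val_succ, pow_succ]
      rw [h2]
      simp [mul_assoc]
end Aux

section Aux2
variable {A : Type*} [Ring A]

lemma swap0 {n : ℕ} (u : Fin (n+1) → A)
    (hu : ∀ i j, i ≠ j → u i * u j = -(u j * u i)) (p : Fin (n+1)) (hp : p ≠ 0) :
    (List.ofFn (u ∘ Equiv.swap 0 p)).prod = -(List.ofFn u).prod := by
  cases n with
  | zero => exact absurd (Fin.ext (by omega)) hp
  | succ m =>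
    set v : Fin (m+2) → A := u ∘ Equiv.swap 0 p with hv
    have hvanti : ∀ i j, i ≠ j → v i * v j = -(v j * v i) := fun i j hij =>
      hu _ _ (fun h => hij ((Equiv.swap 0 p).injective h))
    have hpos : (0 : Fin (m+2)) < p := Fin.pos_of_ne_zero hp
    have hsa0 : p.succAbove 0 = 0 := by
      rw [Fin.succAbove_of_castSucc_lt] <;> simp [hpos]
    have htail : ∀ i : Fin m, v (p.succAbove i.succ) = u (p.succAbove i.succ) := by
      intro i
      have h1 : p.succAbove i.succ ≠ p := Fin.succAbove_ne p i.succ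
      have h2 : p.succAbove i.succ ≠ 0 := by
        rw [← hsa0]
        exact fun h => (Fin.succ_ne_zero i) (p.succAbove_right_injective h)
      simp [hv, Equiv.swap_apply_of_ne_of_ne h2 h1]
    have hA := pullOut u hu p
    have hB := pullOut v hvanti p
    have eaU : List.ofFn (u ∘ p.succAbove) = u 0 :: List.ofFn (fun i : Fin m => u (p.succAbove i.succ)) := by
      rw [List.ofFn_succ]
      exact congrArg₂ List.cons (by simp [hsa0]) rfl
    have eaV : List.ofFn (v ∘ p.succAbove) = u p :: List.ofFn (fun i : Fin m => u (p.succAbove i.succ)) := by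
      rw [List.ofFn_succ]
      refine congrArg₂ List.cons ?_ (congrArg List.ofFn (funext fun i => htail i))
      simp [hv, hsa0]
    have hvp : v p = u 0 := by simp [hv]
    rw [hA, hB, eaU, eaV, hvp, List.prod_cons, List.prod_cons]
    rw [show (u 0 : A) * (u p * (List.ofFn fun i : Fin m => u (p.succAbove i.succ)).prod)
        = (u 0 * u p) * (List.ofFn fun i : Fin m => u (p.succAbove i.succ)).prod from (mul_assoc _ _ _).symm]
    rw [hu 0 p (Ne.symm hp)]
    simp [mul_assoc]

lemma signProd : ∀ {n : ℕ} (u : Fin n → A),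
    (∀ i j, i ≠ j → u i * u j = -(u j * u i)) → ∀ σ : Equiv.Perm (Fin n),
    (List.ofFn fun i => u (σ i)).prod = ((Equiv.Perm.sign σ : ℤ)) • (List.ofFn u).prod := by
  intro n
  induction n with
  | zero => intro u _ σ; simp [Subsingleton.elim σ 1]
  | succ m ih =>
    intro u hu π
    obtain ⟨⟨p, σ⟩, rfl⟩ := Equiv.Perm.decomposeFin.symm.surjective π
    set w : Fin m → A := fun i => u (Equiv.swap 0 p i.succ) with hw
    have hwanti : ∀ i j, i ≠ j → w i * w j = -(w j * w i) := by
      intro i j hij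
      refine hu _ _ (fun h => hij ?_)
      exact Fin.succ_injective _ ((Equiv.swap 0 p).injective h)
    have hofn : (List.ofFn fun i => u (Equiv.Perm.decomposeFin.symm (p, σ) i)).prod
        = u p * (List.ofFn fun i => w (σ i)).prod := by
      rw [List.ofFn_succ, List.prod_cons, Equiv.Perm.decomposeFin_symm_apply_zero]
      congr 1
      exact congrArg List.prod (congrArg List.ofFn (funext fun i => by
        rw [Equiv.Perm.decomposeFin_symm_apply_succ]))
    rw [hofn, ih w hwanti σ]
    have hswap : u p * (List.ofFn w).prod = (List.ofFn (u ∘ Equiv.swap 0 p)).prod := by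
      rw [List.ofFn_succ, List.prod_cons]
      rfl
    rw [Equiv.Perm.decomposeFin.symm_sign, mul_smul_comm, hswap]
    by_cases hp : p = 0
    · subst hp
      simp [Equiv.swap_self, Function.comp_id]
    · rw [swap0 u hu p hp]
      simp [hp, mul_smul]
end Aux2

section Aux3
variable {R M : Type*} [CommRing R] [AddCommGroup M] [Module R M]

lemma prod_mul_rev (Q : QuadraticForm R M) : ∀ {n : ℕ} (e : Fin n → M),
    (List.ofFn fun i => CliffordAlgebra.ι Q (e i)).prod *
      (List.ofFn fun i => CliffordAlgebra.ι Q (e i)).reverse.prod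
    = algebraMap R (CliffordAlgebra Q) (∏ i, Q (e i)) := by
  intro n
  induction n with
  | zero => intro e; simp
  | succ m ih =>
    intro e
    set x := CliffordAlgebra.ι Q (e (Fin.last m)) with hx
    set P := (List.ofFn fun i : Fin m => CliffordAlgebra.ι Q (e i.castSucc)).prod with hP
    set Rv := (List.ofFn fun i : Fin m => CliffordAlgebra.ι Q (e i.castSucc)).reverse.prod with hR
    have key1 : (List.ofFn fun i : Fin (m+1) => CliffordAlgebra.ι Q (e i)).prod = P * x := by
      rw [List.ofFn_succ', List.concat_eq_append, List.prod_append]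
      simp [hP, hx]
    have key2 : (List.ofFn fun i : Fin (m+1) => CliffordAlgebra.ι Q (e i)).reverse.prod
        = x * Rv := by
      rw [List.ofFn_succ', List.concat_eq_append, List.reverse_append]
      simp [hR, hx]
    rw [key1, key2]
    calc P * x * (x * Rv) = P * (x * x) * Rv := by simp [mul_assoc]
      _ = P * algebraMap R (CliffordAlgebra Q) (Q (e (Fin.last m))) * Rv := by
          rw [hx, CliffordAlgebra.ι_sq_scalar]
      _ = algebraMap R (CliffordAlgebra Q) (Q (e (Fin.last m))) * (P * Rv) := by
          rw [← Algebra.commutes (Q (e (Fin.last m))) P, mul_assoc]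
      _ = algebraMap R (CliffordAlgebra Q) (Q (e (Fin.last m))) *
            algebraMap R (CliffordAlgebra Q) (∏ i : Fin m, Q (e i.castSucc)) := by
          rw [hP, hR, ih (fun i => e i.castSucc)]
      _ = algebraMap R (CliffordAlgebra Q) (∏ i : Fin (m+1), Q (e i)) := by
          rw [← map_mul, Fin.prod_univ_castSucc, mul_comm]
end Aux3

/-- The standard polynomial `Sₙ` evaluated at `v₁, …, vₙ`. -/
def stdPoly {A : Type*} [Ring A] (n : ℕ) (v : Fin n → A) : A :=
  ∑ σ : Equiv.Perm (Fin n),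
    ((Equiv.Perm.sign σ : ℤ) • (List.ofFn fun i => v (σ i)).prod)

theorem stmt5 (K V : Type*) [Field K] [CharZero K] [AddCommGroup V] [Module K V]
    (Q : QuadraticForm K V) (n : ℕ) (e : Fin n → V)
    (horth : ∀ i j : Fin n, i ≠ j → QuadraticMap.polar Q (e i) (e j) = 0)
    (hQ : ∀ i, Q (e i) ≠ 0) :
    stdPoly n (fun i => CliffordAlgebra.ι Q (e i)) =
      (n.factorial : ℤ) • (List.ofFn fun i => CliffordAlgebra.ι Q (e i)).prod ∧
    stdPoly n (fun i => CliffordAlgebra.ι Q (e i)) ≠ 0 := by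
  set v : Fin n → CliffordAlgebra Q := fun i => CliffordAlgebra.ι Q (e i) with hv
  have hanti : ∀ i j, i ≠ j → v i * v j = -(v j * v i) := by
    intro i j hij
    have h := CliffordAlgebra.ι_mul_ι_add_swap (Q := Q) (e i) (e j)
    rw [horth i j hij, map_zero] at h
    exact eq_neg_of_add_eq_zero_left h
  have h1 : stdPoly n v = (n.factorial : ℤ) • (List.ofFn v).prod := by
    have hterm : ∀ σ : Equiv.Perm (Fin n),
        ((Equiv.Perm.sign σ : ℤ) • (List.ofFn fun i => v (σ i)).prod) = (List.ofFn v).prod := by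
      intro σ
      rw [signProd v hanti σ, smul_smul, ← Units.val_mul, Int.units_mul_self, Units.val_one,
        one_smul]
    unfold stdPoly
    rw [Finset.sum_congr rfl fun σ _ => hterm σ, Finset.sum_const, Finset.card_univ,
      Fintype.card_perm, Fintype.card_fin, natCast_zsmul]
  have hne : (List.ofFn v).prod ≠ 0 := by
    haveI : Invertible (2 : K) := invertibleOfNonzero two_ne_zero
    intro h
    have h2 : algebraMap K (CliffordAlgebra Q) (∏ i, Q (e i)) = 0 := by
      rw [← prod_mul_rev Q e, ← hv, h, zero_mul]
    have h3 : (∏ i, Q (e i)) ≠ 0 := Finset.prod_ne_zero_iff.mpr fun i _ => hQ i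
    exact h3 ((map_eq_zero_iff _ (algebraMap K (CliffordAlgebra Q)).injective).mp h2)
  refine ⟨h1, ?_⟩
  rw [h1]
  intro h0
  rw [← Int.cast_smul_eq_zsmul K] at h0
  rcases smul_eq_zero.mp h0 with h | h
  · exact absurd h (by exact_mod_cast Nat.cast_ne_zero.mpr n.factorial_ne_zero)
  · exact hne h
end

section
/- Let V be a k-dimensional vector space over a field K of characteristic 0 with quadratic form Q. Then the standard polynomial S_{k+1} is a weak identity of the pair (CliffordAlgebra(Q), V): for any vectors v₁, …, v_{k+1} ∈ V, S_{k+1}(ι(v₁), …, ι(v_{k+1})) = 0 in the Clifford algebra. -/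
theorem stmt6 (K V : Type*) [Field K] [CharZero K] [AddCommGroup V] [Module K V]
    [FiniteDimensional K V] (k : ℕ) (hk : Module.finrank K V = k)
    (Q : QuadraticForm K V) (v : Fin (k + 1) → V) :
    stdPoly (k + 1) (fun i => CliffordAlgebra.ι Q (v i)) = 0 := by
  set m : MultilinearMap K (fun _ : Fin (k + 1) => V) (CliffordAlgebra Q) :=
    (MultilinearMap.mkPiAlgebraFin K (k + 1) (CliffordAlgebra Q)).compLinearMap
      (fun _ => CliffordAlgebra.ι Q) with hm
  have h1 : stdPoly (k + 1) (fun i => CliffordAlgebra.ι Q (v i)) =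
      MultilinearMap.alternatization m v := by
    rw [MultilinearMap.alternatization_apply, stdPoly]
    refine Finset.sum_congr rfl fun σ _ => ?_
    rw [MultilinearMap.domDomCongr_apply, hm, MultilinearMap.compLinearMap_apply,
      MultilinearMap.mkPiAlgebraFin_apply, Units.smul_def]
  rw [h1]
  apply AlternatingMap.map_linearDependent
  intro hli
  have := hli.fintype_card_le_finrank
  simp [hk] at this
end

section
/- Let F be the quotient of the free associative algebra on generators x₁, x₂, … over a field K of characteristic 0 by the GL-ideal generated by [x₁²,x₂] (the ideal generated by all [ℓ²,ℓ'] with ℓ, ℓ' linear in the generators). Then in F, for n = 2: Σ_{σ ∈ Sym₂} sign(σ) x_{σ(1)} y x_{σ(2)} = −(1/2) y S₂(x₁,x₂) − (1/2) S₂(x₁,x₂) y, where S₂(x₁,x₂) = x₁x₂ − x₂x₁. -/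
/-- `p ~ q` when `p = ℓ² * ℓ'` and `q = ℓ' * ℓ²` for linear combinations `ℓ, ℓ'`
of the free generators; quotienting by it imposes the weak identity `[x², y] = 0`. -/
def weakRel (K : Type*) [Field K] (X : Type*)
    (p q : FreeAlgebra K X) : Prop :=
  ∃ ℓ ∈ Submodule.span K (Set.range (FreeAlgebra.ι K (X := X))),
    ∃ ℓ' ∈ Submodule.span K (Set.range (FreeAlgebra.ι K (X := X))),
      p = ℓ ^ 2 * ℓ' ∧ q = ℓ' * ℓ ^ 2

lemma weakKey (K : Type*) [Field K] (a b c : FreeAlgebra K ℕ)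
    (ha : a ∈ Submodule.span K (Set.range (FreeAlgebra.ι K (X := ℕ))))
    (hb : b ∈ Submodule.span K (Set.range (FreeAlgebra.ι K (X := ℕ))))
    (hc : c ∈ Submodule.span K (Set.range (FreeAlgebra.ι K (X := ℕ)))) :
    RingQuot.mkAlgHom K (weakRel K ℕ) a * RingQuot.mkAlgHom K (weakRel K ℕ) b
        * RingQuot.mkAlgHom K (weakRel K ℕ) c
      + RingQuot.mkAlgHom K (weakRel K ℕ) b * RingQuot.mkAlgHom K (weakRel K ℕ) a
        * RingQuot.mkAlgHom K (weakRel K ℕ) c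
    = RingQuot.mkAlgHom K (weakRel K ℕ) c * RingQuot.mkAlgHom K (weakRel K ℕ) a
        * RingQuot.mkAlgHom K (weakRel K ℕ) b
      + RingQuot.mkAlgHom K (weakRel K ℕ) c * RingQuot.mkAlgHom K (weakRel K ℕ) b
        * RingQuot.mkAlgHom K (weakRel K ℕ) a := by
  have h1 := RingQuot.mkAlgHom_rel K
    (show weakRel K ℕ ((a + b) ^ 2 * c) (c * (a + b) ^ 2) from
      ⟨a + b, add_mem ha hb, c, hc, rfl, rfl⟩)
  have h2 := RingQuot.mkAlgHom_rel K
    (show weakRel K ℕ (a ^ 2 * c) (c * a ^ 2) from ⟨a, ha, c, hc, rfl, rfl⟩)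
  have h3 := RingQuot.mkAlgHom_rel K
    (show weakRel K ℕ (b ^ 2 * c) (c * b ^ 2) from ⟨b, hb, c, hc, rfl, rfl⟩)
  simp only [map_mul, map_pow, map_add] at h1 h2 h3
  linear_combination (norm := noncomm_ring) h1 - h2 - h3

theorem stmt9 (K : Type*) [Field K] [CharZero K]
    (y x₁ x₂ : RingQuot (weakRel K ℕ))
    (hy : y = RingQuot.mkAlgHom K (weakRel K ℕ) (FreeAlgebra.ι K 0))
    (hx₁ : x₁ = RingQuot.mkAlgHom K (weakRel K ℕ) (FreeAlgebra.ι K 1))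
    (hx₂ : x₂ = RingQuot.mkAlgHom K (weakRel K ℕ) (FreeAlgebra.ι K 2)) :
    x₁ * y * x₂ - x₂ * y * x₁ =
      -((2 : K)⁻¹ • (y * (x₁ * x₂ - x₂ * x₁)))
        - (2 : K)⁻¹ • ((x₁ * x₂ - x₂ * x₁) * y) := by
  have mem : ∀ i : ℕ, FreeAlgebra.ι K i ∈
      Submodule.span K (Set.range (FreeAlgebra.ι K (X := ℕ))) :=
    fun i => Submodule.subset_span ⟨i, rfl⟩
  have h2 := weakKey K (FreeAlgebra.ι K 1) (FreeAlgebra.ι K 0) (FreeAlgebra.ι K 2)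
    (mem 1) (mem 0) (mem 2)
  have h3 := weakKey K (FreeAlgebra.ι K 2) (FreeAlgebra.ι K 0) (FreeAlgebra.ι K 1)
    (mem 2) (mem 0) (mem 1)
  rw [← hy, ← hx₁, ← hx₂] at h2 h3
  have h2ne : (2 : K) ≠ 0 := two_ne_zero
  apply smul_right_injective (RingQuot (weakRel K ℕ)) h2ne
  simp only [smul_sub, smul_neg, smul_smul, mul_inv_cancel₀ h2ne, one_smul, two_smul]
  have e2 : x₁ * y * x₂ - x₂ * y * x₁ = x₂ * x₁ * y - y * x₁ * x₂ :=
    sub_eq_sub_iff_add_eq_add.mpr h2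
  have e3 : x₁ * y * x₂ - x₂ * y * x₁ = y * x₂ * x₁ - x₁ * x₂ * y := by
    rw [sub_eq_sub_iff_add_eq_add, add_comm (x₁ * y * x₂) (x₁ * x₂ * y), eq_comm,
      add_comm (y * x₂ * x₁) (x₂ * y * x₁)]
    exact h3
  rw [show x₁ * y * x₂ + x₁ * y * x₂ - (x₂ * y * x₁ + x₂ * y * x₁)
      = (x₁ * y * x₂ - x₂ * y * x₁) + (x₁ * y * x₂ - x₂ * y * x₁) from by abel]
  nth_rewrite 1 [e2]
  rw [e3]
  simp only [mul_sub, sub_mul, mul_assoc]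
  abel
end

section
/- Let F be the quotient of the free associative algebra over a field K of characteristic 0 by the ideal generated by all [ℓ²,ℓ'] with ℓ, ℓ' linear combinations of the generators. Then in F: Σ_{σ∈Sym₃} sign(σ) x_{σ(1)} y x_{σ(2)} x_{σ(3)} = −(2/3) y S₃(x₁,x₂,x₃) + (1/3) S₃(x₁,x₂,x₃) y, where S₃ is the standard polynomial of degree 3 and y, x₁, x₂, x₃ are distinct generators. -/
/-!
Polarizing `[ℓ², ℓ'] = 0` shows that `u_i = x_i y + y x_i` commutes with every generator.
Moving `y` leftwards through `x_i x_j x_k y` with `x_p y = u_p - y x_p` and pulling the `u`'s to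
the front gives `S₃ y = 3 A + 2 y S₃`, where `A` is the left-hand side: the three resulting
`u`-terms differ by a cyclic shift or a transposition of the indices, which the signs of the
alternating sum absorb. Solving for `A` needs `3` to be invertible.
-/

open Equiv Equiv.Perm Submodule

theorem sum_perm_fin_three_sign_smul {M : Type*} [AddCommGroup M]
    (f : Fin 3 → Fin 3 → Fin 3 → M) :
    ∑ σ : Perm (Fin 3), (sign σ : ℤ) • f (σ 0) (σ 1) (σ 2) =
      f 0 1 2 - f 0 2 1 - f 1 0 2 + f 1 2 0 + f 2 0 1 - f 2 1 0 := by
  rw [show (Finset.univ : Finset (Perm (Fin 3))) =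
      {1, swap 0 1, swap 0 2, swap 1 2, swap 0 1 * swap 0 2, swap 0 2 * swap 0 1} by decide]
  simp +decide only [Fin.isValue, Finset.mem_insert, not_false_eq_true, Finset.sum_insert,
    Perm.sign_one, Units.val_one, coe_one, id_eq, one_smul, sign_swap', ↓reduceIte, Units.val_neg,
    Int.reduceNeg, swap_apply_left, swap_apply_right, ne_eq, swap_apply_of_ne_of_ne, neg_smul,
    Finset.mem_singleton, Perm.sign_mul, mul_neg, mul_one, neg_neg, coe_mul, Function.comp_apply,
    Finset.sum_singleton]
  abel

theorem sum_perm_sign_mul_eq_of_commute {R : Type*} [Ring R] (a : R) (x : Fin 3 → R)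
    (hu : ∀ i j, Commute (x i * a + a * x i) (x j)) :
    (∑ σ : Perm (Fin 3), (sign σ : ℤ) • (x (σ 0) * x (σ 1) * x (σ 2))) * a =
      3 • ∑ σ : Perm (Fin 3), (sign σ : ℤ) • (x (σ 0) * a * x (σ 1) * x (σ 2)) + 2 • (a *
        ∑ σ : Perm (Fin 3), (sign σ : ℤ) • (x (σ 0) * x (σ 1) * x (σ 2))) := by
  set u := fun i => x i * a + a * x i
  have hmove : ∀ i j k, x i * x j * x k * a =
      u k * (x i * x j) - u j * x i * x k + u i * x j * x k - a * (x i * x j * x k) := by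
    intro i j k
    calc x i * x j * x k * a
        = x i * x j * u k - x i * u j * x k + u i * x j * x k - a * (x i * x j * x k) := by
          simp only [u]; noncomm_ring
      _ = _ := by rw [((hu k i).mul_right (hu k j)).eq, (hu j i).eq]
  calc _ = ∑ σ : Perm (Fin 3), (sign σ : ℤ) • (x (σ 0) * x (σ 1) * x (σ 2) * a) := by
        simp only [Finset.sum_mul, smul_mul_assoc]
    _ = _ := by
      simp only [hmove]
      rw [sum_perm_fin_three_sign_smul (fun i j k => u k * (x i * x j) - u j * x i * x k +
          u i * x j * x k - a * (x i * x j * x k)),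
        sum_perm_fin_three_sign_smul (fun i j k => x i * a * x j * x k),
        sum_perm_fin_three_sign_smul (fun i j k => x i * x j * x k)]
      simp only [u]
      noncomm_ring

theorem eq_neg_two_thirds_smul_add_third_smul {K M : Type*} [Field K] [CharZero K]
    [AddCommGroup M] [Module K M] {A B C : M} (h : C = 3 • A + 2 • B) :
    A = -(((2 : K) * (3 : K)⁻¹) • B) + (3 : K)⁻¹ • C := by
  subst h
  rw [← Nat.cast_smul_eq_nsmul K, ← Nat.cast_smul_eq_nsmul K]
  match_scalars <;> field_simp
  norm_num

theorem commute_mul_add_mul_of_commute_sq {R : Type*} [Ring R] {a b c : R}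
    (ha : Commute (a ^ 2) c) (hb : Commute (b ^ 2) c) (hab : Commute ((a + b) ^ 2) c) :
    Commute (a * b + b * a) c := by
  rw [show a * b + b * a = (a + b) ^ 2 - a ^ 2 - b ^ 2 by noncomm_ring]
  exact (hab.sub_left ha).sub_left hb

theorem commute_mkAlgHom_weakRel_sq {K X : Type*} [Field K] {ℓ ℓ' : FreeAlgebra K X}
    (hℓ : ℓ ∈ span K (Set.range (FreeAlgebra.ι K)))
    (hℓ' : ℓ' ∈ span K (Set.range (FreeAlgebra.ι K))) :
    Commute (RingQuot.mkAlgHom K (weakRel K X) ℓ ^ 2)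
      (RingQuot.mkAlgHom K (weakRel K X) ℓ') := by
  have hrel :=
    RingQuot.mkAlgHom_rel K (show weakRel K X _ _ from ⟨ℓ, hℓ, ℓ', hℓ', rfl, rfl⟩)
  simp only [map_mul, map_pow] at hrel
  exact hrel

theorem stmt10 (K : Type*) [Field K] [CharZero K]
    (y : RingQuot (weakRel K ℕ)) (x : Fin 3 → RingQuot (weakRel K ℕ))
    (hy : y = RingQuot.mkAlgHom K (weakRel K ℕ) (FreeAlgebra.ι K 0))
    (hx : ∀ i : Fin 3,
      x i = RingQuot.mkAlgHom K (weakRel K ℕ) (FreeAlgebra.ι K ((i : ℕ) + 1))) :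
    (∑ σ : Equiv.Perm (Fin 3),
        (Equiv.Perm.sign σ : ℤ) • (x (σ 0) * y * x (σ 1) * x (σ 2))) =
      -(((2 : K) * (3 : K)⁻¹) •
          (y * ∑ σ : Equiv.Perm (Fin 3),
            (Equiv.Perm.sign σ : ℤ) • (x (σ 0) * x (σ 1) * x (σ 2))))
        + (3 : K)⁻¹ •
          ((∑ σ : Equiv.Perm (Fin 3),
            (Equiv.Perm.sign σ : ℤ) • (x (σ 0) * x (σ 1) * x (σ 2))) * y) := by
  have hgen : ∀ n : ℕ, FreeAlgebra.ι K n ∈ span K (Set.range (FreeAlgebra.ι K)) :=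
    fun n => subset_span ⟨n, rfl⟩
  refine eq_neg_two_thirds_smul_add_third_smul (sum_perm_sign_mul_eq_of_commute y x ?_)
  intro i j
  rw [hy, hx i, hx j]
  refine commute_mul_add_mul_of_commute_sq (commute_mkAlgHom_weakRel_sq (hgen _) (hgen _))
    (commute_mkAlgHom_weakRel_sq (hgen _) (hgen _)) ?_
  rw [← map_add]
  exact commute_mkAlgHom_weakRel_sq (add_mem (hgen _) (hgen _)) (hgen _)
end

section
/- Let A be an associative algebra over a field K of characteristic 0 such that x² is central in A for every x in a subspace G of A, and let g₁, …, gₙ ∈ G. Then gᵢ · Sₙ(g₁,…,gₙ) = (−1)^{n−1} · Sₙ(g₁,…,gₙ) · gᵢ for every i = 1,…,n, where Sₙ is the standard polynomial. -/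
open Equiv Equiv.Perm Finset

theorem Commute.mul_add_mul_of_sq {R : Type*} [Ring R] {a b z : R} (ha : Commute (a ^ 2) z)
    (hb : Commute (b ^ 2) z) (hab : Commute ((a + b) ^ 2) z) : Commute (a * b + b * a) z := by
  have h : a * b + b * a = (a + b) ^ 2 - a ^ 2 - b ^ 2 := by noncomm_ring
  rw [h]
  exact (hab.sub_left ha).sub_left hb

theorem sub_nsmul_eq_neg_of_sum_range_sub_nsmul_eq_zero {K V : Type*} [Field K] [CharZero K]
    [AddCommGroup V] [Module K V] {n : ℕ} {a b : V}
    (h : ∑ k ∈ range (n + 1), (a - k • b) = 0) : a - n • b = -a := by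
  have hsum : (n + 1) • (2 • a - n • b) = 0 := by
    have hgauss : (∑ k ∈ range (n + 1), k) * 2 = (n + 1) * n := sum_range_id_mul_two (n + 1)
    rw [sum_sub_distrib, sum_const, card_range, ← sum_smul] at h
    calc (n + 1) • (2 • a - n • b)
        = 2 • ((n + 1) • a) - ((∑ k ∈ range (n + 1), k) * 2) • b := by rw [hgauss]; module
      _ = 2 • ((n + 1) • a - (∑ k ∈ range (n + 1), k) • b) := by module
      _ = 0 := by rw [h, smul_zero]
  have hn : ((n + 1 : ℕ) : K) ≠ 0 := Nat.cast_ne_zero.mpr n.succ_ne_zero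
  rw [← Nat.cast_smul_eq_nsmul K, smul_eq_zero, or_iff_right hn, sub_eq_zero, two_nsmul] at hsum
  rw [← hsum]
  abel

section

variable {A : Type*} [Ring A]

theorem prod_ofFn_insertNth_succ_add_castSucc {m : ℕ} (f : Fin (m + 1) → A) (x : A)
    (k : Fin (m + 1)) (hc : ∀ z, Commute (x * f k + f k * x) z) :
    (List.ofFn (Fin.insertNth k.succ x f)).prod + (List.ofFn (Fin.insertNth k.castSucc x f)).prod
      = (x * f k + f k * x) * (List.ofFn (k.removeNth f)).prod := by
  induction f using Fin.consCases with | cons a p =>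
  induction k using Fin.cases with
  | zero =>
    rw [Fin.insertNth_succ_cons, Fin.castSucc_zero, Fin.insertNth_zero', Fin.insertNth_zero',
      Fin.cons_zero, Fin.removeNth_zero, Fin.tail_cons]
    simp only [List.ofFn_cons, List.prod_cons]
    noncomm_ring
  | succ k =>
    cases m with
    | zero => exact k.elim0
    | succ m =>
    rw [Fin.cons_succ] at hc ⊢
    have hrem :
        k.succ.removeNth (Fin.cons a p : Fin (m + 2) → A) = Fin.cons a (k.removeNth p) :=
      Fin.cons_comp_succ_succAbove a p k
    rw [← Fin.succ_castSucc, Fin.insertNth_succ_cons, Fin.insertNth_succ_cons, hrem]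
    simp only [List.ofFn_cons, List.prod_cons]
    rw [← mul_add, prod_ofFn_insertNth_succ_add_castSucc p x k hc, ← mul_assoc, ← mul_assoc,
      (hc a).eq]

theorem removeNth_succ_comp_swap {α : Type*} {m : ℕ} (f : Fin (m + 1) → α) (k : Fin m) :
    k.succ.removeNth (f ∘ swap k.castSucc k.succ) = k.castSucc.removeNth f := by
  ext j
  simp only [Fin.removeNth, Function.comp_apply]
  congr 1
  rw [Fin.ext_iff]
  simp only [swap_apply_def, Fin.succAbove, Fin.ext_iff, Fin.lt_def, apply_ite Fin.val,
    Fin.val_succ, Fin.val_castSucc]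
  split_ifs <;> omega

theorem stdPoly_eq_alternatization (n : ℕ) (v : Fin n → A) :
    stdPoly n v = MultilinearMap.alternatization (MultilinearMap.mkPiAlgebraFin ℤ n A) v := by
  simp [stdPoly, MultilinearMap.alternatization_apply, Units.smul_def]

theorem stdPoly_eq_zero_of_eq {n : ℕ} {v : Fin n → A} {i j : Fin n} (hv : v i = v j)
    (hij : i ≠ j) :
    stdPoly n v = 0 := by
  rw [stdPoly_eq_alternatization]
  exact AlternatingMap.map_eq_zero_of_eq _ v hv hij

theorem cons_comp_decomposeFin_symm_mul_cycleRange {α : Type*} {n : ℕ} (x : α) (g : Fin n → α)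
    (k : Fin (n + 1)) (σ : Perm (Fin n)) :
    (fun j => (Fin.cons x g : Fin (n + 1) → α) ((decomposeFin.symm (0, σ) * k.cycleRange) j)) =
      Fin.insertNth k x (fun j => g (σ j)) := by
  rw [Fin.eq_insertNth_iff]
  refine ⟨by simp, funext fun j => ?_⟩
  simp [Fin.removeNth, Fin.cycleRange_succAbove]

theorem bijective_decomposeFin_symm_mul_cycleRange (n : ℕ) :
    Function.Bijective fun p : Fin (n + 1) × Perm (Fin n) =>
      decomposeFin.symm (0, p.2) * p.1.cycleRange := by
  rw [Fintype.bijective_iff_injective_and_card]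
  refine ⟨?_, by simp [Fintype.card_perm, Nat.factorial_succ]⟩
  rintro ⟨k, σ⟩ ⟨k', σ'⟩ h
  simp only at h
  have hk : k = k' := by
    apply (decomposeFin.symm (0, σ) * k.cycleRange).injective
    calc _ = (0 : Fin (n + 1)) := by simp
      _ = _ := by rw [h]; simp
  subst hk
  obtain rfl : σ = σ' := congrArg Prod.snd (decomposeFin.symm.injective (mul_right_cancel h))
  rfl

variable {n : ℕ}

def stdPolyInsert (g : Fin n → A) (x : A) (k : Fin (n + 1)) : A :=
  ∑ σ : Perm (Fin n), (sign σ : ℤ) • (List.ofFn (Fin.insertNth k x fun j => g (σ j))).prod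

def stdPolyAnticomm (g : Fin (n + 1) → A) (x : A) (k : Fin (n + 1)) : A :=
  ∑ σ : Perm (Fin (n + 1)), (sign σ : ℤ) •
    ((x * g (σ k) + g (σ k) * x) * (List.ofFn (k.removeNth fun j => g (σ j))).prod)

theorem stdPoly_succ_cons (x : A) (g : Fin n → A) :
    stdPoly (n + 1) (Fin.cons x g) =
      ∑ k : Fin (n + 1), (-1 : ℤ) ^ (k : ℕ) • stdPolyInsert g x k := by
  simp_rw [stdPolyInsert, smul_sum, ← Fintype.sum_prod_type']
  refine (Fintype.sum_bijective _ (bijective_decomposeFin_symm_mul_cycleRange n) _ _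
    fun p => ?_).symm
  rw [cons_comp_decomposeFin_symm_mul_cycleRange x g p.1 p.2, Perm.sign_mul,
    decomposeFin.symm_sign, Fin.sign_cycleRange, smul_smul]
  simp [mul_comm]

theorem stdPolyInsert_zero (g : Fin n → A) (x : A) : stdPolyInsert g x 0 = x * stdPoly n g := by
  simp only [stdPolyInsert, stdPoly, Fin.insertNth_zero', List.ofFn_cons, List.prod_cons, mul_sum,
    mul_smul_comm]

theorem stdPolyInsert_last (g : Fin n → A) (x : A) :
    stdPolyInsert g x (Fin.last n) = stdPoly n g * x := by
  simp only [stdPolyInsert, stdPoly, Fin.insertNth_last', List.ofFn_succ', Fin.snoc_castSucc,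
    Fin.snoc_last, List.prod_concat, sum_mul, smul_mul_assoc]

theorem stdPolyInsert_succ {g : Fin (n + 1) → A} {x : A}
    (hc : ∀ j z, Commute (x * g j + g j * x) z) (k : Fin (n + 1)) :
    stdPolyInsert g x k.succ = -stdPolyInsert g x k.castSucc + stdPolyAnticomm g x k := by
  simp only [stdPolyInsert, stdPolyAnticomm, ← sum_neg_distrib, ← sum_add_distrib, ← smul_neg,
    ← smul_add]
  refine sum_congr rfl fun σ _ => congrArg _ ?_
  rw [eq_neg_add_iff_add_eq, add_comm, prod_ofFn_insertNth_succ_add_castSucc _ x k (hc (σ k))]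

theorem stdPolyAnticomm_succ (g : Fin (n + 1) → A) (x : A) (k : Fin n) :
    stdPolyAnticomm g x k.succ = -stdPolyAnticomm g x k.castSucc := by
  rw [stdPolyAnticomm, stdPolyAnticomm, ← sum_neg_distrib]
  refine (Fintype.sum_equiv (Equiv.mulRight (swap k.castSucc k.succ)) _ _ fun σ => ?_).symm
  have hsign : (sign (σ * swap k.castSucc k.succ) : ℤ) = -sign σ := by
    simp [Perm.sign_swap (Fin.castSucc_lt_succ (i := k)).ne]
  have hword := removeNth_succ_comp_swap (fun j => g (σ j)) k
  simp only [coe_mulRight, Perm.mul_apply, swap_apply_right, hsign, neg_smul]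
  rw [← hword]
  rfl

theorem stdPolyAnticomm_eq_neg_one_pow_smul (g : Fin (n + 1) → A) (x : A) (k : Fin (n + 1)) :
    stdPolyAnticomm g x k = (-1 : ℤ) ^ (k : ℕ) • stdPolyAnticomm g x 0 := by
  induction k using Fin.induction with
  | zero => simp
  | succ k ih => rw [stdPolyAnticomm_succ, ih, Fin.val_succ, Fin.val_castSucc, pow_succ, mul_comm,
      mul_smul, neg_one_smul]

theorem stdPolyInsert_eq {g : Fin (n + 1) → A} {x : A}
    (hc : ∀ j z, Commute (x * g j + g j * x) z) (k : Fin (n + 2)) :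
    stdPolyInsert g x k =
      (-1 : ℤ) ^ (k : ℕ) • (stdPolyInsert g x 0 - (k : ℕ) • stdPolyAnticomm g x 0) := by
  induction k using Fin.induction with
  | zero => simp
  | succ k ih =>
    rw [stdPolyInsert_succ hc, ih, stdPolyAnticomm_eq_neg_one_pow_smul g x k, Fin.val_succ,
      Fin.val_castSucc, pow_succ]
    module

end

theorem stmt11 (K A : Type*) [Field K] [CharZero K] [Ring A] [Algebra K A]
    (G : Submodule K A) (hG : ∀ g ∈ G, ∀ x : A, g ^ 2 * x = x * g ^ 2)
    (n : ℕ) (g : Fin n → A) (hg : ∀ i, g i ∈ G) (i : Fin n) :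
    g i * stdPoly n g = ((-1 : ℤ) ^ (n - 1)) • (stdPoly n g * g i) := by
  obtain ⟨m, rfl⟩ : ∃ m, n = m + 1 := ⟨n - 1, by have := i.pos; omega⟩
  have hc : ∀ j z, Commute (g i * g j + g j * g i) z := fun j z =>
    Commute.mul_add_mul_of_sq (hG _ (hg i) z) (hG _ (hg j) z) (hG _ (G.add_mem (hg i) (hg j)) z)
  set S := stdPoly (m + 1) g
  have hsum : ∑ k ∈ range (m + 2), (g i * S - k • stdPolyAnticomm g (g i) 0) = 0 := by
    rw [← Fin.sum_univ_eq_sum_range fun k => g i * S - k • stdPolyAnticomm g (g i) 0,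
      ← stdPoly_eq_zero_of_eq (v := Fin.cons (g i) g) (i := 0) (j := i.succ) rfl
        (Fin.succ_ne_zero i).symm, stdPoly_succ_cons]
    refine sum_congr rfl fun k _ => ?_
    rw [stdPolyInsert_eq hc k, smul_smul, ← pow_add, Even.neg_one_pow ⟨_, rfl⟩, one_smul,
      stdPolyInsert_zero]
  rw [← stdPolyInsert_last, stdPolyInsert_eq hc, stdPolyInsert_zero, Fin.val_last,
    sub_nsmul_eq_neg_of_sum_range_sub_nsmul_eq_zero (K := K) hsum, Nat.add_sub_cancel, smul_smul,
    ← pow_add, Odd.neg_one_pow ⟨m, by ring⟩, smul_neg, neg_one_smul, neg_neg]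
end

section
/- Let A be an associative K-algebra (char K = 0) and g₁, g₂, y elements such that x² commutes with all elements of A whenever x is a linear combination of g₁, g₂, y. Then g₁·y·g₂ − g₂·y·g₁ = −([g₁,g₂]∘y), where [a,b] = ab − ba and a∘b = (1/2)(ab+ba). -/
theorem stmt13 (K A : Type*) [Field K] [CharZero K] [Ring A] [Algebra K A]
    (g₁ g₂ y : A)
    (h : ∀ α β γ : K, ∀ x : A,
        (α • g₁ + β • g₂ + γ • y) ^ 2 * x = x * (α • g₁ + β • g₂ + γ • y) ^ 2) :
    g₁ * y * g₂ - g₂ * y * g₁ =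
      -((2 : K)⁻¹ • ((g₁ * g₂ - g₂ * g₁) * y + y * (g₁ * g₂ - g₂ * g₁))) := by
  -- g₁² , g₂², y² are central
  have hg1 := fun x => h 1 0 0 x
  have hg2 := fun x => h 0 1 0 x
  have hy := fun x => h 0 0 1 x
  have h1y := fun x => h 1 0 1 x
  have h2y := fun x => h 0 1 1 x
  simp only [one_smul, zero_smul, add_zero, zero_add] at hg1 hg2 hy h1y h2y
  -- g₁y + yg₁ commutes with g₂
  have c1 : (g₁ * y + y * g₁) * g₂ = g₂ * (g₁ * y + y * g₁) := by
    have e1 := h1y g₂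
    have e2 := hg1 g₂
    have e3 := hy g₂
    simp only [pow_two] at e1 e2 e3
    linear_combination (norm := noncomm_ring) e1 - e2 - e3
  have c2 : (g₂ * y + y * g₂) * g₁ = g₁ * (g₂ * y + y * g₂) := by
    have e1 := h2y g₁
    have e2 := hg2 g₁
    have e3 := hy g₁
    simp only [pow_two] at e1 e2 e3
    linear_combination (norm := noncomm_ring) e1 - e2 - e3
  have key : (2 : K) • (g₁ * y * g₂ - g₂ * y * g₁) =
      -((g₁ * g₂ - g₂ * g₁) * y + y * (g₁ * g₂ - g₂ * g₁)) := by
    have h2 : (2 : K) • (g₁ * y * g₂ - g₂ * y * g₁) =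
        (g₁ * y * g₂ - g₂ * y * g₁) + (g₁ * y * g₂ - g₂ * y * g₁) := two_smul K _
    rw [h2]
    linear_combination (norm := noncomm_ring) c1 - c2
  rw [← smul_neg, ← key, smul_smul, inv_mul_cancel₀ (two_ne_zero), one_smul]
end

section
/- Let e₁, …, eₖ be an orthogonal basis of a k-dimensional vector space V with a nondegenerate symmetric bilinear form (char K = 0), with Q(eᵢ) ≠ 0. In the Clifford algebra C of V, for any sequence of column lengths r₁ ≥ r₂ ≥ ⋯ ≥ r_p with r₁ ≤ k, the product Π_{i=1}^{p} S_{rᵢ}(ι(e₁),…,ι(e_{rᵢ})) of standard polynomials is nonzero in C. -/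
/-! The vectors `ι(eᵢ)` pairwise anticommute, by orthogonality, and are invertible, since
`ι(eᵢ)² = Q(eᵢ) ≠ 0`. For pairwise anticommuting `y` every monomial `y_{σ 1} ⋯ y_{σ n}` equals
`sign σ • y₁ ⋯ yₙ` (check it on adjacent transpositions, which generate the symmetric group), so
`Sₙ(y) = n! • y₁ ⋯ yₙ` is a unit in characteristic zero. The product in question is thus a product
of units of the nontrivial algebra `C`. -/

open Equiv

section Anticommuting

variable {A : Type*} [Ring A]

theorem prod_ofFn_swap_castSucc_succ_of_anticomm {n : ℕ} (w : Fin (n + 1) → A) (i : Fin n)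
    (h : w i.castSucc * w i.succ = -(w i.succ * w i.castSucc)) :
    (List.ofFn fun j => w (swap i.castSucc i.succ j)).prod = -(List.ofFn w).prod := by
  induction n with
  | zero => exact i.elim0
  | succ n ih =>
    cases i using Fin.cases with
    | zero =>
      have hfix (j : Fin n) : swap 0 1 j.succ.succ = j.succ.succ :=
        swap_apply_of_ne_of_ne (Fin.succ_ne_zero _) (Fin.succ_succ_ne_one _)
      simp only [Fin.castSucc_zero, Fin.succ_zero_eq_one] at h ⊢
      simp only [List.ofFn_succ, List.prod_cons, Fin.succ_zero_eq_one, swap_apply_left,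
        swap_apply_right, hfix]
      rw [← mul_assoc, ← mul_assoc, h, neg_mul, neg_neg]
    | succ i =>
      rw [← Fin.succ_castSucc] at h ⊢
      have hsucc (j : Fin (n + 1)) :
          swap i.castSucc.succ i.succ.succ j.succ = (swap i.castSucc i.succ j).succ :=
        (Fin.succ_injective _).swap_apply _ _ _
      have hzero : swap i.castSucc.succ i.succ.succ 0 = 0 :=
        swap_apply_of_ne_of_ne (Fin.succ_ne_zero _).symm (Fin.succ_ne_zero _).symm
      rw [List.ofFn_succ, List.ofFn_succ (f := w)]
      simp only [hsucc, hzero, List.prod_cons]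
      rw [ih (fun j => w j.succ) i h, mul_neg]

theorem prod_ofFn_perm_of_pairwise_anticomm {n : ℕ} (σ : Perm (Fin n)) (w : Fin n → A)
    (hw : Pairwise fun i j => w i * w j = -(w j * w i)) :
    (List.ofFn fun i => w (σ i)).prod = (Perm.sign σ : ℤ) • (List.ofFn w).prod := by
  cases n with
  | zero => simp [Subsingleton.elim σ 1]
  | succ n =>
    have hσ : σ ∈ Submonoid.closure (Set.range fun i : Fin n => swap i.castSucc i.succ) := by
      simp [Perm.mclosure_swap_castSucc_succ]
    induction hσ using Submonoid.closure_induction generalizing w with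
    | mem _ hτ =>
      obtain ⟨i, rfl⟩ := hτ
      rw [prod_ofFn_swap_castSucc_succ_of_anticomm w i (hw (Fin.castSucc_lt_succ (i := i)).ne),
        Perm.sign_swap (Fin.castSucc_lt_succ (i := i)).ne]
      simp
    | one => simp
    | mul τ ρ _ _ hτ hρ =>
      have hwτ : Pairwise fun i j => w (τ i) * w (τ j) = -(w (τ j) * w (τ i)) :=
        fun i j hij => hw (τ.injective.ne hij)
      rw [Perm.sign_mul, Units.val_mul, mul_comm, mul_smul, ← hτ w hw,
        ← hρ _ hwτ]
      rfl

theorem stdPoly_eq_factorial_smul_of_pairwise_anticomm {n : ℕ} (y : Fin n → A)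
    (hy : Pairwise fun i j => y i * y j = -(y j * y i)) :
    stdPoly n y = n.factorial • (List.ofFn y).prod := by
  simp only [stdPoly, prod_ofFn_perm_of_pairwise_anticomm _ y hy, smul_smul, ← Units.val_mul,
    Int.units_mul_self, Units.val_one, one_smul, Finset.sum_const, Finset.card_univ,
    Fintype.card_perm, Fintype.card_fin]

theorem isUnit_stdPoly_of_pairwise_anticomm (K : Type*) [Field K] [CharZero K] [Algebra K A]
    {n : ℕ} (y : Fin n → A) (hy : Pairwise fun i j => y i * y j = -(y j * y i))
    (hunit : ∀ i, IsUnit (y i)) : IsUnit (stdPoly n y) := by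
  rw [stdPoly_eq_factorial_smul_of_pairwise_anticomm y hy, nsmul_eq_mul]
  refine IsUnit.mul ?_ (List.prod_isUnit fun x hx => ?_)
  · simpa using ((Nat.cast_ne_zero (R := K)).mpr n.factorial_ne_zero).isUnit.map (algebraMap K A)
  · obtain ⟨i, rfl⟩ := List.mem_ofFn.mp hx
    exact hunit i

end Anticommuting

theorem stmt17_general (K V : Type*) [Field K] [CharZero K] [AddCommGroup V] [Module K V]
    (k : ℕ) (b : Module.Basis (Fin k) K V) (Q : QuadraticForm K V)
    (horth : ∀ i j : Fin k, i ≠ j → QuadraticMap.polar Q (b i) (b j) = 0)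
    (hQ : ∀ i, Q (b i) ≠ 0)
    (p : ℕ) (r : Fin p → ℕ) (hle : ∀ i, r i ≤ k) :
    (List.ofFn fun i : Fin p =>
        stdPoly (r i) (fun j : Fin (r i) =>
          CliffordAlgebra.ι Q (b ⟨(j : ℕ), lt_of_lt_of_le j.2 (hle i)⟩))).prod
      ≠ 0 := by
  -- makes `CliffordAlgebra Q` nontrivial, so that units are nonzero
  let _ : Invertible (2 : K) := invertibleOfNonzero two_ne_zero
  refine (List.prod_isUnit fun x hx => ?_).ne_zero
  obtain ⟨i, rfl⟩ := List.mem_ofFn.mp hx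
  refine isUnit_stdPoly_of_pairwise_anticomm K _ (fun j j' hjj' => ?_) fun j => ?_
  · exact CliffordAlgebra.ι_mul_ι_comm_of_isOrtho
      (QuadraticMap.isOrtho_polarBilin.mp (horth _ _ (by simpa [Fin.ext_iff] using hjj')))
  · exact CliffordAlgebra.isUnit_ι_of_isUnit Q (hQ _).isUnit

theorem stmt17 (K V : Type*) [Field K] [CharZero K] [AddCommGroup V] [Module K V]
    (k : ℕ) (b : Module.Basis (Fin k) K V) (Q : QuadraticForm K V)
    (horth : ∀ i j : Fin k, i ≠ j → QuadraticMap.polar Q (b i) (b j) = 0)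
    (hQ : ∀ i, Q (b i) ≠ 0)
    (p : ℕ) (r : Fin p → ℕ) (hpos : ∀ i, 0 < r i)
    (hdec : ∀ i j : Fin p, i ≤ j → r j ≤ r i) (hle : ∀ i, r i ≤ k) :
    (List.ofFn fun i : Fin p =>
        stdPoly (r i) (fun j : Fin (r i) =>
          CliffordAlgebra.ι Q (b ⟨(j : ℕ), lt_of_lt_of_le j.2 (hle i)⟩))).prod
      ≠ 0 :=
  stmt17_general K V k b Q horth hQ p r hle
end
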